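/- arXiv:2102.02112 — 9 statements merged into one kernel-verified Lean document; each statement's English description precedes it below -/
import Mathlib

section
/- Let f : (a,b) → ℝ be continuous, and for t ∈ (a,b) define the lower left Dini derivative f'_{-,min}(t) = liminf_{s→t⁻} (f(s)-f(t))/(s-t) and the upper right Dini derivative f'_{+,max}(t) = limsup_{s→t⁺} (f(s)-f(t))/(s-t). Then for any t₀ ∈ (a,b), liminf_{t→t₀⁻} f'_{+,max}(t) ≤ f'_{-,min}(t₀). -/
open Filter Set

/-- Upper right Dini derivative `f'_{+,max}(t)`, valued in the extended reals. -/
noncomputable def dPlus (f : ℝ → ℝ) (t : ℝ) : EReal :=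
  Filter.limsup (fun s => (((f s - f t) / (s - t) : ℝ) : EReal)) (nhdsWithin t (Set.Ioi t))

/-- Lower left Dini derivative `f'_{-,min}(t)`, valued in the extended reals. -/
noncomputable def dMinus (f : ℝ → ℝ) (t : ℝ) : EReal :=
  Filter.liminf (fun s => (((f s - f t) / (s - t) : ℝ) : EReal)) (nhdsWithin t (Set.Iio t))

open Topology

/-! If the upper right Dini derivative of a continuous `f` is at least `q` on `(l, t₀)`, the
comparison principle for right Dini derivatives gives `f t₀ - f s ≥ q (t₀ - s)` for every
`s ∈ (l, t₀)`, so all left difference quotients at `t₀` are `≥ q` and hence so is their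
liminf. Applied to every real `q` below `liminf_{t → t₀⁻} dPlus f t`, this is the theorem. -/

theorem frequently_lt_slope_of_lt_dPlus {f : ℝ → ℝ} {x r : ℝ}
    (h : (r : EReal) < dPlus f x) : ∃ᶠ z in 𝓝[>] x, r < slope f x z := by
  refine (frequently_lt_of_lt_limsup (by isBoundedDefault) h).mono fun z hz => ?_
  rw [slope_def_field]
  exact_mod_cast hz

theorem mul_sub_le_sub_of_le_dPlus {f : ℝ → ℝ} {s t q : ℝ} (hf : ContinuousOn f (Icc s t))
    (hst : s ≤ t) (h : ∀ x ∈ Ico s t, (q : EReal) ≤ dPlus f x) :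
    q * (t - s) ≤ f t - f s := by
  -- The library's comparison principle gives upper bounds, so compare `-f` with the line
  -- `x ↦ -f s - q (x - s)`.
  have hB' (x : ℝ) : HasDerivWithinAt (fun x => -f s - q * (x - s)) (-q) (Ici x) x := by
    simpa using (((hasDerivWithinAt_id x _).sub_const s).const_mul q).const_sub (-f s)
  have bound : ∀ x ∈ Ico s t, ∀ r, -q < r →
      ∃ᶠ z in 𝓝[>] x, slope (fun x => -f x) x z < r := by
    intro x hx r hr
    have hlt : ((-r : ℝ) : EReal) < dPlus f x :=
      lt_of_lt_of_le (by exact_mod_cast neg_lt.1 hr) (h x hx)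
    refine (frequently_lt_slope_of_lt_dPlus hlt).mono fun z hz => ?_
    rw [slope_neg]
    linarith
  have := image_le_of_liminf_slope_right_le_deriv_boundary hf.neg (by simp) (by fun_prop)
    (fun x _ => hB' x) bound (right_mem_Icc.2 hst)
  simp only [Pi.neg_apply] at this
  linarith

theorem coe_le_dMinus_of_le_dPlus {f : ℝ → ℝ} {l t₀ q : ℝ} (hl : l < t₀)
    (hf : ContinuousOn f (Ioc l t₀)) (h : ∀ x ∈ Ioo l t₀, (q : EReal) ≤ dPlus f x) :
    (q : EReal) ≤ dMinus f t₀ := by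
  refine le_liminf_of_le (by isBoundedDefault) ?_
  filter_upwards [Ioo_mem_nhdsLT hl] with s hs
  have hgrowth := mul_sub_le_sub_of_le_dPlus (hf.mono (Icc_subset_Ioc hs.1 le_rfl)) hs.2.le
    fun x hx => h x ⟨hs.1.trans_le hx.1, hx.2⟩
  have hquot : q ≤ (f s - f t₀) / (s - t₀) := by
    rw [le_div_iff_of_neg (sub_neg.2 hs.2)]
    linarith
  exact_mod_cast hquot

theorem liminf_dPlus_le_dMinus (a b : ℝ) (f : ℝ → ℝ)
    (hf : ContinuousOn f (Set.Ioo a b)) (t₀ : ℝ) (ht₀ : t₀ ∈ Set.Ioo a b) :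
    Filter.liminf (fun t => dPlus f t) (nhdsWithin t₀ (Set.Iio t₀)) ≤ dMinus f t₀ := by
  refine EReal.ge_of_forall_gt_iff_ge.1 fun q hq => ?_
  obtain ⟨l, hl, hsub⟩ := mem_nhdsLT_iff_exists_Ioo_subset.1 (eventually_lt_of_lt_liminf hq)
  refine coe_le_dMinus_of_le_dPlus (max_lt hl ht₀.1) (hf.mono ?_) fun x hx => (hsub ?_).le
  · exact Ioc_subset_Ioo (le_max_right l a) ht₀.2
  · exact ⟨(le_max_left l a).trans_lt hx.1, hx.2⟩
end

section
/- Let f : [0,l] → ℝ be continuous with f(0) = f(l) = 0. Suppose that for every t ∈ (0,l), f''(t) ≤ 0 in the support sense, i.e., there exists A ∈ ℝ such that f(t+τ) ≤ f(t) + Aτ + o(τ²) as τ → 0. Then f(t) ≥ 0 for all t ∈ [0,l]. -/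
open Filter Set

/-- `f''(t) ≤ B` in the support sense: there is `A ∈ ℝ` with
`f(t+τ) ≤ f(t) + Aτ + (B/2)τ² + o(τ²)` as `τ → 0`. -/
def SuppSecondLE (f : ℝ → ℝ) (t B : ℝ) : Prop :=
  ∃ A : ℝ, ∀ ε > (0 : ℝ), ∀ᶠ τ in nhds (0 : ℝ),
    f (t + τ) ≤ f t + A * τ + B / 2 * τ ^ 2 + ε * τ ^ 2

theorem nonneg_of_suppSecondLE_zero (l : ℝ) (hl : 0 < l) (f : ℝ → ℝ)
    (hf : ContinuousOn f (Set.Icc 0 l)) (h0 : f 0 = 0) (hl0 : f l = 0)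
    (hsupp : ∀ t ∈ Set.Ioo 0 l, SuppSecondLE f t 0) :
    ∀ t ∈ Set.Icc 0 l, 0 ≤ f t := by
  by_contra h
  push_neg at h
  obtain ⟨t₀, ht₀, hf₀⟩ := h
  set η : ℝ := -f t₀ / l ^ 2 with hη
  have hηpos : 0 < η := div_pos (by linarith) (by positivity)
  set g : ℝ → ℝ := fun t => f t + η * t * (l - t) with hg
  have hgc : ContinuousOn g (Set.Icc 0 l) :=
    hf.add (Continuous.continuousOn (by continuity))
  obtain ⟨s, hs, hmin⟩ := isCompact_Icc.exists_isMinOn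
    ⟨0, Set.left_mem_Icc.2 hl.le⟩ hgc
  have hmin' : ∀ x ∈ Set.Icc 0 l, g s ≤ g x := fun x hx => hmin hx
  have hgt₀ : g t₀ < 0 := by
    have h1 : t₀ * (l - t₀) ≤ l ^ 2 / 4 := by nlinarith [ht₀.1, ht₀.2, sq_nonneg (2 * t₀ - l)]
    have h2 : η * (t₀ * (l - t₀)) ≤ η * (l ^ 2 / 4) :=
      mul_le_mul_of_nonneg_left h1 hηpos.le
    have h3 : η * (l ^ 2 / 4) = -f t₀ / 4 := by
      rw [hη]; field_simp
    simp only [hg]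
    nlinarith
  have hgs : g s < 0 := lt_of_le_of_lt (hmin' t₀ ht₀) hgt₀
  have hg0 : g 0 = 0 := by simp [hg, h0]
  have hgl : g l = 0 := by simp [hg, hl0]
  have hsIoo : s ∈ Set.Ioo 0 l := by
    refine ⟨lt_of_le_of_ne hs.1 ?_, lt_of_le_of_ne hs.2 ?_⟩
    · rintro rfl; rw [hg0] at hgs; linarith
    · rintro rfl; rw [hgl] at hgs; linarith
  obtain ⟨A, hA⟩ := hsupp s hsIoo
  have hev := hA (η / 2) (by positivity)
  have hten : Filter.Tendsto (fun τ : ℝ => s + τ) (nhds 0) (nhds s) := by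
    simpa using (tendsto_const_nhds.add tendsto_id :
      Filter.Tendsto (fun τ : ℝ => s + τ) (nhds 0) (nhds (s + 0)))
  have hev2 : ∀ᶠ τ in nhds (0 : ℝ), s + τ ∈ Set.Ioo 0 l :=
    hten.eventually (isOpen_Ioo.eventually_mem hsIoo)
  have key : ∀ᶠ τ in nhds (0 : ℝ),
      (η * (2 * s - l) - A) * τ + η / 2 * τ ^ 2 ≤ 0 := by
    filter_upwards [hev, hev2] with τ h1 h2
    have h3 : g s ≤ g (s + τ) := hmin' _ (Set.Ioo_subset_Icc_self h2)
    simp only [hg] at h3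
    nlinarith [h1, h3]
  rw [Metric.eventually_nhds_iff] at key
  obtain ⟨δ, hδ, hδ'⟩ := key
  have k1 := hδ' (y := δ / 2) (by
    simp only [dist_zero_right, Real.norm_eq_abs, abs_of_pos (by linarith : (0:ℝ) < δ/2)]
    linarith)
  have k2 := hδ' (y := -(δ / 2)) (by
    simp only [dist_zero_right, Real.norm_eq_abs, abs_neg,
      abs_of_pos (by linarith : (0:ℝ) < δ/2)]
    linarith)
  nlinarith [k1, k2, mul_pos hηpos (mul_pos hδ hδ)]
end

section
/- Let f : (a,b) → ℝ be continuous. If for every t ∈ (a,b) there exists A ∈ ℝ such that f(t+τ) ≤ f(t) + Aτ + o(τ²) as τ → 0 (i.e., f'' ≤ 0 in the support sense), then f is concave on (a,b). -/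
/-!
For `ε > 0` and any slope `q`, the support condition makes the symmetric second difference of
`g x = f x - ε x² + q x` strictly negative at small nonzero increments, so `g` has no local
minimum in `(a, b)`. On a segment `[x, y]`, choosing `q` so that `g x = g y`, the minimum of `g`
over `[x, y]` is therefore attained at an endpoint, which is the chord inequality for
`f - ε x²`. Concavity of `f` follows by letting `ε → 0`.
-/

open Filter Set

/-- `f''(t) ≤ 0` in the support sense: there is `A ∈ ℝ` with
`f(t+τ) ≤ f(t) + Aτ + o(τ²)` as `τ → 0`. -/
def SuppSecondLEZero (f : ℝ → ℝ) (t : ℝ) : Prop :=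
  ∃ A : ℝ, ∀ ε > (0 : ℝ), ∀ᶠ τ in nhds (0 : ℝ),
    f (t + τ) ≤ f t + A * τ + ε * τ ^ 2

open Topology

theorem min_le_of_forall_not_isLocalMin {h : ℝ → ℝ} {x y : ℝ} (hh : ContinuousOn h (Icc x y))
    (hmin : ∀ c ∈ Ioo x y, ¬ IsLocalMin h c) {t : ℝ} (ht : t ∈ Icc x y) :
    min (h x) (h y) ≤ h t := by
  obtain ⟨c, hc, hcmin⟩ := isCompact_Icc.exists_isMinOn ⟨t, ht⟩ hh
  have hc_end : c = x ∨ c = y := by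
    by_contra! hne
    have hcIoo : c ∈ Ioo x y := ⟨hc.1.lt_of_ne' hne.1, hc.2.lt_of_ne hne.2⟩
    exact hmin c hcIoo (hcmin.isLocalMin (Icc_mem_nhds hcIoo.1 hcIoo.2))
  rcases hc_end with rfl | rfl
  · exact min_le_left _ _ |>.trans (hcmin ht)
  · exact min_le_right _ _ |>.trans (hcmin ht)

theorem Convex.concaveOn_of_forall_not_isLocalMin_add_mul {s : Set ℝ} {g : ℝ → ℝ}
    (hs : Convex ℝ s) (hg : ContinuousOn g s)
    (hmin : ∀ c ∈ s, ∀ q : ℝ, ¬ IsLocalMin (fun x => g x + q * x) c) :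
    ConcaveOn ℝ s g := by
  refine LinearOrder.concaveOn_of_lt hs fun x hx y hy hxy a b ha hb hab => ?_
  have hIcc : Icc x y ⊆ s := hs.ordConnected.out hx hy
  set q := -((g y - g x) / (y - x))
  have hend : g y + q * y = g x + q * x := by
    simp only [q]; field_simp [(sub_pos.2 hxy).ne']; ring
  have hz : a • x + b • y ∈ Icc x y := by
    rw [← segment_eq_Icc hxy.le]; exact ⟨a, b, ha.le, hb.le, hab, rfl⟩
  have key := min_le_of_forall_not_isLocalMin (h := fun t => g t + q * t)
    ((hg.mono hIcc).add (by fun_prop)) (fun c hc => hmin c (hIcc (Ioo_subset_Icc_self hc)) q) hz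
  simp only [hend, min_self, smul_eq_mul] at key ⊢
  linear_combination key + b * hend + (g x + q * x) * hab

theorem SuppSecondLEZero.eventually_add_add_sub_le {f : ℝ → ℝ} {t : ℝ} (h : SuppSecondLEZero f t)
    {ε : ℝ} (hε : 0 < ε) : ∀ᶠ τ in 𝓝 0, f (t + τ) + f (t - τ) ≤ 2 * f t + ε * τ ^ 2 := by
  obtain ⟨A, hA⟩ := h
  have hneg : Tendsto Neg.neg (𝓝 (0 : ℝ)) (𝓝 0) := by simpa using tendsto_neg (0 : ℝ)
  filter_upwards [hA (ε / 2) (half_pos hε), hneg.eventually (hA (ε / 2) (half_pos hε))]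
    with τ hplus hminus
  rw [← sub_eq_add_neg] at hminus
  nlinarith

theorem not_isLocalMin_of_eventually_add_add_lt {g : ℝ → ℝ} {c : ℝ}
    (h : ∀ᶠ τ in 𝓝[≠] 0, g (c + τ) + g (c - τ) < 2 * g c) : ¬ IsLocalMin g c := by
  intro hmin
  have hshift : Tendsto (c + ·) (𝓝 (0 : ℝ)) (𝓝 c) := by
    simpa using tendsto_const_nhds.add (tendsto_id (x := 𝓝 (0 : ℝ)))
  have hshift' : Tendsto (c - ·) (𝓝 (0 : ℝ)) (𝓝 c) := by
    simpa using tendsto_const_nhds.sub (tendsto_id (x := 𝓝 (0 : ℝ)))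
  have hle : ∀ᶠ τ in 𝓝[≠] 0, g c ≤ g (c + τ) ∧ g c ≤ g (c - τ) :=
    nhdsWithin_le_nhds ((hshift.eventually hmin).and (hshift'.eventually hmin))
  obtain ⟨τ, hlt, hle₁, hle₂⟩ := (h.and hle).exists
  linarith

theorem SuppSecondLEZero.not_isLocalMin_sub_mul_sq_add_mul {f : ℝ → ℝ} {c : ℝ}
    (h : SuppSecondLEZero f c) {ε : ℝ} (hε : 0 < ε) (q : ℝ) :
    ¬ IsLocalMin (fun x => f x - ε * x ^ 2 + q * x) c := by
  refine not_isLocalMin_of_eventually_add_add_lt ?_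
  filter_upwards [nhdsWithin_le_nhds (h.eventually_add_add_sub_le hε), self_mem_nhdsWithin]
    with τ hτ (hτ0 : τ ≠ 0)
  have : 0 < ε * τ ^ 2 := by positivity
  linarith

theorem ConcaveOn.of_forall_pos_sub_mul_sq {s : Set ℝ} {f : ℝ → ℝ}
    (h : ∀ ε > 0, ConcaveOn ℝ s (fun x => f x - ε * x ^ 2)) : ConcaveOn ℝ s f := by
  refine ⟨(h 1 one_pos).1, fun x hx y hy a b ha hb hab => ?_⟩
  set C := a * x ^ 2 + b * y ^ 2 - (a * x + b * y) ^ 2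
  have hε : ∀ ε > 0, a • f x + b • f y ≤ f (a • x + b • y) + ε * C := fun ε hε => by
    have := (h ε hε).2 hx hy ha hb hab
    simp only [smul_eq_mul] at this ⊢
    linarith
  have hlim : Tendsto (fun ε => f (a • x + b • y) + ε * C) (𝓝[>] 0) (𝓝 (f (a • x + b • y))) := by
    have := ((tendsto_id (x := 𝓝 (0 : ℝ))).mul_const C).const_add (f (a • x + b • y))
    simpa using this.mono_left nhdsWithin_le_nhds
  exact ge_of_tendsto hlim (eventually_nhdsWithin_of_forall hε)

theorem concaveOn_of_suppSecondLE (a b : ℝ) (f : ℝ → ℝ)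
    (hf : ContinuousOn f (Set.Ioo a b))
    (hsupp : ∀ t ∈ Set.Ioo a b, SuppSecondLEZero f t) :
    ConcaveOn ℝ (Set.Ioo a b) f := by
  refine ConcaveOn.of_forall_pos_sub_mul_sq fun ε hε => ?_
  refine (convex_Ioo a b).concaveOn_of_forall_not_isLocalMin_add_mul (hf.sub (by fun_prop)) ?_
  exact fun c hc q => (hsupp c hc).not_isLocalMin_sub_mul_sq_add_mul hε q
end

section
/- Let k < 0 and let f : [0,l] → ℝ be continuous with f(0) = f(l) = 0. Suppose that for every t ∈ (0,l), f''(t) + k·f(t) ≤ 0 in the support sense, i.e., there exists A ∈ ℝ such that f(t+τ) ≤ f(t) + Aτ + (−k·f(t)/2)τ² + o(τ²) as τ → 0. Then f(t) ≥ 0 for all t ∈ [0,l]. -/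
open Filter Set

/-- Comparison principle `f'' + k f ≤ 0` (support sense), `k < 0`. -/
theorem nonneg_of_suppSecond_neg_curv (k l : ℝ) (hk : k < 0) (hl : 0 < l)
    (f : ℝ → ℝ) (hf : ContinuousOn f (Set.Icc 0 l)) (h0 : f 0 = 0) (hl0 : f l = 0)
    (hsupp : ∀ t ∈ Set.Ioo 0 l, SuppSecondLE f t (-k * f t)) :
    ∀ t ∈ Set.Icc 0 l, 0 ≤ f t := by
  by_contra hcon
  push_neg at hcon
  obtain ⟨s, hs, hsneg⟩ := hcon
  obtain ⟨t₀, ht₀, hmin⟩ :=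
    isCompact_Icc.exists_isMinOn ⟨0, Set.left_mem_Icc.2 hl.le⟩ hf
  have hneg : f t₀ < 0 := lt_of_le_of_lt (hmin hs) hsneg
  have ht₀0 : 0 < t₀ := by
    rcases ht₀.1.lt_or_eq with h | h
    · exact h
    · exact absurd hneg (by rw [← h, h0]; exact lt_irrefl 0)
  have ht₀l : t₀ < l := by
    rcases ht₀.2.lt_or_eq with h | h
    · exact h
    · exact absurd hneg (by rw [h, hl0]; exact lt_irrefl 0)
  obtain ⟨A, hA⟩ := hsupp t₀ ⟨ht₀0, ht₀l⟩
  set ε := k * f t₀ / 4 with hεdef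
  have hεpos : 0 < ε := by
    have : 0 < k * f t₀ := mul_pos_of_neg_of_neg hk hneg
    linarith
  have h1 := hA ε hεpos
  have hnegtend : Tendsto (fun τ : ℝ => -τ) (nhds 0) (nhds 0) := by
    simpa using (continuous_neg.tendsto (0 : ℝ))
  have h2 : ∀ᶠ τ in nhds (0 : ℝ),
      f (t₀ + -τ) ≤ f t₀ + A * -τ + (-k * f t₀) / 2 * (-τ) ^ 2 + ε * (-τ) ^ 2 :=
    hnegtend.eventually h1
  have h3 : ∀ᶠ τ in nhds (0 : ℝ), |τ| < min t₀ (l - t₀) := by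
    have hδ : 0 < min t₀ (l - t₀) := lt_min ht₀0 (by linarith)
    simpa using eventually_abs_sub_lt (0 : ℝ) hδ
  obtain ⟨τ, ⟨hI1, hI2, hI3⟩, hτpos⟩ :=
    ((((h1.and (h2.and h3))).filter_mono (nhdsWithin_le_nhds (s := Set.Ioi 0))).and
      eventually_mem_nhdsWithin).exists
  have hτ0 : 0 < τ := hτpos
  have habs : |τ| = τ := abs_of_pos hτ0
  rw [habs] at hI3
  have hmem1 : t₀ + τ ∈ Set.Icc 0 l := by
    constructor
    · linarith
    · have := lt_of_lt_of_le hI3 (min_le_right _ _); linarith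
  have hmem2 : t₀ + -τ ∈ Set.Icc 0 l := by
    constructor
    · have := lt_of_lt_of_le hI3 (min_le_left _ _); linarith
    · linarith
  have hm1 : f t₀ ≤ f (t₀ + τ) := hmin hmem1
  have hm2 : f t₀ ≤ f (t₀ + -τ) := hmin hmem2
  nlinarith [sq_nonneg τ, mul_pos hεpos (mul_pos hτ0 hτ0)]
end

section
/- Let k > 0 and l ∈ (0, π/√k), and let f : [0,l] → ℝ be continuous with f(0) = f(l) = 0. Suppose that for every t ∈ (0,l), f''(t) + k·f(t) ≤ 0 in the support sense. Then f(t) ≥ 0 for all t ∈ [0,l]. -/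
open Filter Set

lemma cos_one_sub (x : ℝ) : 1 - Real.cos x = 2 * Real.sin (x/2)^2 := by
  have h := Real.cos_two_mul (x/2)
  have h2 := Real.sin_sq_add_cos_sq (x/2)
  rw [show 2 * (x/2) = x by ring] at h
  nlinarith

lemma tendsto_sin_div : Tendsto (fun y : ℝ => Real.sin y / y) (nhdsWithin 0 {0}ᶜ) (nhds 1) := by
  have h : HasDerivAt Real.sin 1 0 := by simpa using Real.hasDerivAt_sin 0
  have := hasDerivAt_iff_tendsto_slope.mp h
  refine this.congr fun y => ?_
  simp [slope_fun_def, div_eq_inv_mul]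

lemma tendsto_one_sub_cos_div_sq :
    Tendsto (fun x : ℝ => (1 - Real.cos x) / x ^ 2) (nhdsWithin 0 {0}ᶜ) (nhds (1/2)) := by
  have h2 : Tendsto (fun x : ℝ => x/2) (nhdsWithin (0:ℝ) {0}ᶜ) (nhdsWithin (0:ℝ) {0}ᶜ) := by
    apply tendsto_nhdsWithin_of_tendsto_nhds_of_eventually_within
    · exact tendsto_nhdsWithin_of_tendsto_nhds (by simpa using (continuous_id.div_const 2).tendsto (0:ℝ))
    · exact eventually_mem_nhdsWithin.mono fun x hx => by
        simp only [mem_compl_iff, mem_singleton_iff] at *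
        exact div_ne_zero hx two_ne_zero
  have hg : Tendsto (fun x : ℝ => (Real.sin (x/2) / (x/2))^2 / 2) (nhdsWithin 0 {0}ᶜ)
      (nhds (1/2)) := by
    have := (tendsto_sin_div.comp h2).pow 2
    simpa using this.div_const 2
  refine hg.congr' ?_
  filter_upwards [eventually_mem_nhdsWithin] with x hx
  simp only [mem_compl_iff, mem_singleton_iff] at hx
  rw [cos_one_sub]
  field_simp

/-- Comparison principle `f'' + k f ≤ 0` (support sense), `k > 0`, `l < π/√k`. -/
theorem nonneg_of_suppSecond_pos_curv (k l : ℝ) (hk : 0 < k) (hl : 0 < l)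
    (hlπ : l < Real.pi / Real.sqrt k)
    (f : ℝ → ℝ) (hf : ContinuousOn f (Set.Icc 0 l)) (h0 : f 0 = 0) (hl0 : f l = 0)
    (hsupp : ∀ t ∈ Set.Ioo 0 l, SuppSecondLE f t (-k * f t)) :
    ∀ t ∈ Set.Icc 0 l, 0 ≤ f t := by
  by_contra hcon
  push_neg at hcon
  obtain ⟨t₁, ht₁, hft₁⟩ := hcon
  have hsk : 0 < Real.sqrt k := Real.sqrt_pos.mpr hk
  have hsl : Real.sqrt k < Real.pi / l := by
    rw [lt_div_iff₀ hl]; rw [lt_div_iff₀ hsk] at hlπ; linarith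
  obtain ⟨r, hr1, hrli⟩ : ∃ r : ℝ, Real.sqrt k < r ∧ r < Real.pi / l :=
    ⟨(Real.sqrt k + Real.pi / l) / 2, by linarith, by linarith⟩
  have hrl : r * l < Real.pi := by rw [lt_div_iff₀ hl] at hrli; linarith
  have hr0 : 0 < r := hsk.trans hr1
  have hkr : k < r ^ 2 := by nlinarith [Real.sq_sqrt hk.le]
  obtain ⟨c, hccont, hc, htrig⟩ : ∃ c : ℝ → ℝ, Continuous c ∧
      (∀ t ∈ Set.Icc 0 l, 0 < c t) ∧
      (∀ t τ : ℝ, c (t + τ) + c (t - τ) = 2 * c t * Real.cos (r * τ)) := by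
    refine ⟨fun t => Real.cos (r * (t - l / 2)), Real.continuous_cos.comp (by continuity),
      ?_, ?_⟩
    · intro t ht
      apply Real.cos_pos_of_mem_Ioo
      constructor
      · nlinarith [ht.1, ht.2]
      · nlinarith [ht.1, ht.2]
    · intro t τ
      show Real.cos (r * (t + τ - l / 2)) + Real.cos (r * (t - τ - l / 2))
          = 2 * Real.cos (r * (t - l / 2)) * Real.cos (r * τ)
      rw [show r * (t + τ - l / 2) = r * (t - l / 2) + r * τ by ring,
        show r * (t - τ - l / 2) = r * (t - l / 2) - r * τ by ring,
        Real.cos_add, Real.cos_sub]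
      ring
  obtain ⟨t₀, ht₀, hmax⟩ := isCompact_Icc.exists_isMaxOn
    (⟨0, Set.left_mem_Icc.mpr hl.le⟩ : (Set.Icc (0:ℝ) l).Nonempty)
    ((hf.neg.div hccont.continuousOn fun t ht => (hc t ht).ne') :
      ContinuousOn (fun t => -f t / c t) (Set.Icc 0 l))
  have hct' : 0 < c t₀ := hc t₀ ht₀
  obtain ⟨L, hL, heq, hkey⟩ : ∃ L : ℝ, 0 < L ∧ f t₀ = -(L * c t₀) ∧
      ∀ t ∈ Set.Icc 0 l, -(L * c t) ≤ f t := by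
    refine ⟨-f t₀ / c t₀, ?_, by field_simp, ?_⟩
    · exact lt_of_lt_of_le (div_pos (neg_pos.mpr hft₁) (hc t₁ ht₁)) (hmax ht₁)
    · intro t ht
      have h1 : -f t / c t ≤ -f t₀ / c t₀ := hmax ht
      rw [div_le_iff₀ (hc t ht)] at h1
      have h2 : 0 < c t := hc t ht
      nlinarith [hmax ht₁, div_pos (neg_pos.mpr hft₁) (hc t₁ ht₁)]
  have hft₀ : f t₀ < 0 := by rw [heq]; nlinarith
  have ht₀i : t₀ ∈ Set.Ioo 0 l := by
    refine ⟨ht₀.1.lt_of_ne fun h => ?_, ht₀.2.lt_of_ne fun h => ?_⟩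
    · rw [← h, h0] at hft₀; linarith
    · rw [h, hl0] at hft₀; linarith
  obtain ⟨A, hA⟩ := hsupp t₀ ht₀i
  obtain ⟨ε₀, hε₀, hε₀def⟩ : ∃ ε₀ : ℝ, 0 < ε₀ ∧ ε₀ = L * c t₀ * (r ^ 2 - k) / 8 := by
    refine ⟨_, ?_, rfl⟩
    have : 0 < r ^ 2 - k := by linarith
    positivity
  have hA' := hA ε₀ hε₀
  have hAneg : ∀ᶠ τ in nhds (0:ℝ), f (t₀ + -τ) ≤ f t₀ + A * (-τ) +
      (-k * f t₀) / 2 * (-τ) ^ 2 + ε₀ * (-τ) ^ 2 := by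
    have hneg : Filter.Tendsto (fun τ : ℝ => -τ) (nhds 0) (nhds 0) := by
      simpa using (continuous_neg.tendsto (0:ℝ))
    exact hneg.eventually hA'
  have hEmem : ∀ᶠ τ in nhds (0:ℝ), t₀ + τ ∈ Set.Icc 0 l ∧ t₀ - τ ∈ Set.Icc 0 l := by
    have hmin : (0:ℝ) < min t₀ (l - t₀) := lt_min ht₀i.1 (by linarith [ht₀i.2])
    filter_upwards [eventually_abs_sub_lt 0 hmin] with τ hτ
    rw [sub_zero, abs_lt] at hτ
    have m1 := min_le_left t₀ (l - t₀)
    have m2 := min_le_right t₀ (l - t₀)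
    have h1 : τ < t₀ := lt_of_lt_of_le hτ.2 m1
    have h2 : τ < l - t₀ := lt_of_lt_of_le hτ.2 m2
    have h3 : -t₀ < τ := by linarith [hτ.1]
    have h4 : -(l - t₀) < τ := by linarith [hτ.1]
    exact ⟨⟨by linarith, by linarith⟩, ⟨by linarith, by linarith⟩⟩
  have hQ : ∀ᶠ τ in nhds (0:ℝ),
      L * c t₀ * (1 - Real.cos (r * τ)) ≤ (k * (L * c t₀) / 2 + ε₀) * τ ^ 2 := by
    filter_upwards [hA', hAneg, hEmem] with τ h1 h2 hm
    have e1 : -(L * c (t₀ + τ)) ≤ f (t₀ + τ) := hkey _ hm.1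
    have e2 : -(L * c (t₀ - τ)) ≤ f (t₀ - τ) := hkey _ hm.2
    rw [show t₀ + -τ = t₀ - τ by ring] at h2
    have trig := htrig t₀ τ
    rw [heq] at h1 h2
    nlinarith [h1, h2, e1, e2, trig]
  have hcomp : Filter.Tendsto (fun τ : ℝ => r * τ)
      (nhdsWithin 0 {0}ᶜ) (nhdsWithin 0 {0}ᶜ) := by
    apply tendsto_nhdsWithin_of_tendsto_nhds_of_eventually_within
    · apply tendsto_nhdsWithin_of_tendsto_nhds
      have h : Filter.Tendsto (fun τ : ℝ => r * τ) (nhds 0) (nhds (r * 0)) :=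
        (continuous_const.mul continuous_id).tendsto 0
      rwa [mul_zero] at h
    · exact eventually_mem_nhdsWithin.mono fun x hx => by
        simp only [Set.mem_compl_iff, Set.mem_singleton_iff] at *
        exact mul_ne_zero hr0.ne' hx
  have hTend : Filter.Tendsto
      (fun τ : ℝ => L * c t₀ * r ^ 2 * ((1 - Real.cos (r * τ)) / (r * τ) ^ 2))
      (nhdsWithin 0 {0}ᶜ) (nhds (L * c t₀ * r ^ 2 * (1 / 2))) :=
    tendsto_const_nhds.mul (tendsto_one_sub_cos_div_sq.comp hcomp)
  have hfinal : L * c t₀ * r ^ 2 * (1 / 2) ≤ k * (L * c t₀) / 2 + ε₀ := by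
    apply le_of_tendsto hTend
    filter_upwards [hQ.filter_mono nhdsWithin_le_nhds, eventually_mem_nhdsWithin] with τ hτ hτ0
    simp only [Set.mem_compl_iff, Set.mem_singleton_iff] at hτ0
    have hτ2 : (0:ℝ) < τ ^ 2 := by positivity
    calc L * c t₀ * r ^ 2 * ((1 - Real.cos (r * τ)) / (r * τ) ^ 2)
        = (L * c t₀ * (1 - Real.cos (r * τ))) / τ ^ 2 := by
          rw [show (r * τ) ^ 2 = r ^ 2 * τ ^ 2 by ring]
          field_simp
      _ ≤ k * (L * c t₀) / 2 + ε₀ := by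
          rw [div_le_iff₀ hτ2]; linarith
  rw [hε₀def] at hfinal
  nlinarith [mul_pos (mul_pos hL hct') (sub_pos.mpr hkr), hfinal]
end

section
/- Let f : [0,l] → ℝ be continuous with f(0) = f(l) = 0, and suppose that for every t ∈ (0,l), f''(t) ≥ 0 in the support sense, i.e., there exists A ∈ ℝ such that f(t+τ) ≥ f(t) + Aτ + o(τ²) as τ → 0. Then f(t) ≤ 0 for all t ∈ [0,l]. -/
open Filter Set

/-- `f''(t) ≥ 0` in the support sense: there is `A ∈ ℝ` with
`f(t+τ) ≥ f(t) + Aτ + o(τ²)` as `τ → 0`. -/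
def SuppSecondGEZero (f : ℝ → ℝ) (t : ℝ) : Prop :=
  ∃ A : ℝ, ∀ ε > (0 : ℝ), ∀ᶠ τ in nhds (0 : ℝ),
    f t + A * τ - ε * τ ^ 2 ≤ f (t + τ)

/-!
A maximum principle. The support condition gives the symmetric second difference
`f(s+τ) + f(s-τ) - 2 f(s) ≥ -2ετ² + o(τ²)` for every `ε > 0`, while at a local maximum of
`f + σ (· - c)²` the same second difference is at most `-2στ²`; so such a perturbation of `f`
attains its maximum over `[a, b]` at an endpoint. Letting `σ → 0` gives `f ≤ max (f a) (f b)`.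
-/

open Topology

theorem SuppSecondGEZero.not_isLocalMax_add_sq {f : ℝ → ℝ} {s : ℝ}
    (hf : SuppSecondGEZero f s) {σ : ℝ} (hσ : 0 < σ) (c : ℝ) :
    ¬ IsLocalMax (fun t => f t + σ * (t - c) ^ 2) s := by
  intro hmax
  obtain ⟨A, hA⟩ := hf
  have hshift : Tendsto (s + ·) (𝓝 0) (𝓝 s) := by
    simpa using (continuous_const_add s).tendsto 0
  have hneg : Tendsto Neg.neg (𝓝 (0 : ℝ)) (𝓝 0) := by
    simpa using continuous_neg.tendsto (0 : ℝ)
  have hnear := (hA (σ / 2) (half_pos hσ)).and (hshift.eventually hmax)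
  obtain ⟨τ, hτ, ⟨hsupp_pos, hmax_pos⟩, hsupp_neg, hmax_neg⟩ :=
    (hnear.and (hneg.eventually hnear)).exists_gt
  simp only [mul_neg] at hsupp_pos hmax_pos hsupp_neg hmax_neg
  nlinarith [mul_pos hσ (mul_pos hτ hτ)]

section MaximumPrinciple

variable {f : ℝ → ℝ} {a b : ℝ}

theorem le_max_add_of_suppSecondGEZero (hf : ContinuousOn f (Icc a b))
    (hsupp : ∀ t ∈ Ioo a b, SuppSecondGEZero f t) {t : ℝ} (ht : t ∈ Icc a b)
    {σ : ℝ} (hσ : 0 < σ) : f t ≤ max (f a) (f b) + σ * (b - a) ^ 2 := by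
  set g : ℝ → ℝ := fun x => f x + σ * (x - t) ^ 2
  have hg : ContinuousOn g (Icc a b) :=
    hf.add (by fun_prop : Continuous fun x : ℝ => σ * (x - t) ^ 2).continuousOn
  obtain ⟨s, hs, hgmax⟩ := isCompact_Icc.exists_isMaxOn ⟨t, ht⟩ hg
  have hs_end : s = a ∨ s = b := by
    by_contra! hne
    have hs_int : s ∈ Ioo a b := ⟨hs.1.lt_of_ne hne.1.symm, hs.2.lt_of_ne hne.2⟩
    exact (hsupp s hs_int).not_isLocalMax_add_sq hσ t
      (hgmax.isLocalMax (Icc_mem_nhds hs_int.1 hs_int.2))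
  have hfs : f s ≤ max (f a) (f b) := by rcases hs_end with rfl | rfl <;> simp
  have hdist : (s - t) ^ 2 ≤ (b - a) ^ 2 := by
    apply sq_le_sq' <;> linarith [hs.1, hs.2, ht.1, ht.2]
  calc f t = g t := by simp [g]
    _ ≤ g s := hgmax ht
    _ ≤ max (f a) (f b) + σ * (b - a) ^ 2 :=
      add_le_add hfs (mul_le_mul_of_nonneg_left hdist hσ.le)

theorem le_max_of_suppSecondGEZero (hf : ContinuousOn f (Icc a b))
    (hsupp : ∀ t ∈ Ioo a b, SuppSecondGEZero f t) {t : ℝ} (ht : t ∈ Icc a b) :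
    f t ≤ max (f a) (f b) := by
  have hlim : Tendsto (fun σ => max (f a) (f b) + σ * (b - a) ^ 2) (𝓝[>] 0)
      (𝓝 (max (f a) (f b))) := by
    have hcont : Continuous fun σ : ℝ => max (f a) (f b) + σ * (b - a) ^ 2 := by fun_prop
    simpa using (hcont.tendsto 0).mono_left nhdsWithin_le_nhds
  exact ge_of_tendsto hlim (eventually_nhdsWithin_of_forall fun σ hσ =>
    le_max_add_of_suppSecondGEZero hf hsupp ht hσ)

end MaximumPrinciple

theorem nonpos_of_suppSecondGE_zero_general (l : ℝ) (f : ℝ → ℝ)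
    (hf : ContinuousOn f (Set.Icc 0 l)) (h0 : f 0 = 0) (hl0 : f l = 0)
    (hsupp : ∀ t ∈ Set.Ioo 0 l, SuppSecondGEZero f t) :
    ∀ t ∈ Set.Icc 0 l, f t ≤ 0 := by
  intro t ht
  simpa [h0, hl0] using le_max_of_suppSecondGEZero hf hsupp ht

theorem nonpos_of_suppSecondGE_zero (l : ℝ) (hl : 0 < l) (f : ℝ → ℝ)
    (hf : ContinuousOn f (Set.Icc 0 l)) (h0 : f 0 = 0) (hl0 : f l = 0)
    (hsupp : ∀ t ∈ Set.Ioo 0 l, SuppSecondGEZero f t) :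
    ∀ t ∈ Set.Icc 0 l, f t ≤ 0 :=
  nonpos_of_suppSecondGE_zero_general l f hf h0 hl0 hsupp
end

section
/- Let k ∈ ℝ and let f : [0,l] → ℝ be twice differentiable on (0,l) and continuous on [0,l], with f(0) = f(l) = 0, f''(t) + k·f(t) ≤ 0 for all t ∈ (0,l), and l < π/√k if k > 0. Then f(t) ≥ 0 for all t ∈ [0,l]. -/
/-!
Choose `ω > 0` with `k < ω²` and `ω l < π`; then `φ t = cos (ω (t - l/2))` is positive on `[0, l]`
and a strict supersolution, `φ'' + k φ = (k - ω²) φ < 0`. If `f` took a negative value, `f / φ`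
would attain a negative minimum `m` at an interior point `t₀`, and `u = f - m φ ≥ 0` would vanish
there, forcing `u''(t₀) ≥ 0`; but `u''(t₀) = u''(t₀) + k u(t₀) ≤ -m (φ'' + k φ)(t₀) < 0`.
-/

open Filter Set Topology Real

theorem IsLocalMin.deriv_deriv_nonneg {f : ℝ → ℝ} {x : ℝ} (h : IsLocalMin f x)
    (hc : ContinuousAt f x) : 0 ≤ deriv (deriv f) x := by
  by_contra! hneg
  have hmax := isLocalMax_of_deriv_deriv_neg hneg h.deriv_eq_zero hc
  have hconst : f =ᶠ[𝓝 x] fun _ => f x := by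
    filter_upwards [h, hmax] with y hmin hmax using le_antisymm hmax hmin
  rw [hconst.deriv.deriv_eq] at hneg
  simp at hneg

theorem IsLocalMin.nonneg_of_hasDerivAt_of_hasDerivAt {f f' : ℝ → ℝ} {x a : ℝ}
    (h : IsLocalMin f x) (hf : ∀ᶠ y in 𝓝 x, HasDerivAt f (f' y) y) (hf' : HasDerivAt f' a x) :
    0 ≤ a := by
  have hderiv : deriv f =ᶠ[𝓝 x] f' := hf.mono fun y hy => hy.deriv
  rw [← hf'.deriv, ← hderiv.deriv_eq]
  exact h.deriv_deriv_nonneg hf.self_of_nhds.continuousAt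

theorem nonneg_of_pos_strict_supersolution {a b : ℝ} {q φ φ' φ'' f : ℝ → ℝ}
    (hφ : ∀ t, HasDerivAt φ (φ' t) t) (hφ' : ∀ t, HasDerivAt φ' (φ'' t) t)
    (hφ_pos : ∀ t ∈ Icc a b, 0 < φ t) (hφ_super : ∀ t ∈ Ioo a b, φ'' t + q t * φ t < 0)
    (hf : ContinuousOn f (Icc a b)) (hdiff : ∀ t ∈ Ioo a b, DifferentiableAt ℝ f t)
    (hdiff2 : ∀ t ∈ Ioo a b, DifferentiableAt ℝ (deriv f) t) (ha : 0 ≤ f a) (hb : 0 ≤ f b)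
    (hf_super : ∀ t ∈ Ioo a b, deriv (deriv f) t + q t * f t ≤ 0) :
    ∀ t ∈ Icc a b, 0 ≤ f t := by
  by_contra! ⟨t, ht, hft⟩
  obtain ⟨t₀, ht₀, hmin⟩ := isCompact_Icc.exists_isMinOn ⟨t, ht⟩
    (hf.div (fun s _ => (hφ s).continuousAt.continuousWithinAt) fun s hs => (hφ_pos s hs).ne')
  set m := f t₀ / φ t₀ with hm_def
  have hm : m < 0 := (hmin ht).trans_lt (div_neg_of_neg_of_pos hft (hφ_pos t ht))
  have hm_le : ∀ s ∈ Icc a b, m * φ s ≤ f s := fun s hs =>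
    (le_div_iff₀ (hφ_pos s hs)).1 (hmin hs)
  have hfm : f t₀ = m * φ t₀ := by rw [hm_def, div_mul_cancel₀ _ (hφ_pos t₀ ht₀).ne']
  have ht₀_mem : t₀ ∈ Ioo a b := by
    refine ⟨ht₀.1.lt_of_ne ?_, ht₀.2.lt_of_ne ?_⟩ <;> rintro rfl
    · exact hm.not_ge (div_nonneg ha (hφ_pos _ ht₀).le)
    · exact hm.not_ge (div_nonneg hb (hφ_pos _ ht₀).le)
  have hu_min : IsLocalMin (fun s => f s - m * φ s) t₀ := by
    filter_upwards [Icc_mem_nhds ht₀_mem.1 ht₀_mem.2] with s hs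
    linarith [hm_le s hs]
  have hu'' : 0 ≤ deriv (deriv f) t₀ - m * φ'' t₀ :=
    hu_min.nonneg_of_hasDerivAt_of_hasDerivAt (f' := fun s => deriv f s - m * φ' s)
      (eventually_of_mem (Ioo_mem_nhds ht₀_mem.1 ht₀_mem.2) fun s hs =>
        (hdiff s hs).hasDerivAt.sub ((hφ s).const_mul m))
      ((hdiff2 t₀ ht₀_mem).hasDerivAt.sub ((hφ' t₀).const_mul m))
  have hf_super₀ := hf_super t₀ ht₀_mem
  rw [hfm] at hf_super₀
  nlinarith [mul_pos_of_neg_of_neg hm (hφ_super t₀ ht₀_mem)]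

theorem exists_pos_sq_gt_mul_lt_pi {k l : ℝ} (hl : 0 < l) (hlπ : 0 < k → l < π / √k) :
    ∃ ω : ℝ, 0 < ω ∧ k < ω ^ 2 ∧ ω * l < π := by
  have hsqrt : √k < π / l := by
    rcases le_or_gt k 0 with hk | hk
    · rw [sqrt_eq_zero'.2 hk]
      positivity
    · rw [lt_div_iff₀ hl, mul_comm, ← lt_div_iff₀ (sqrt_pos.2 hk)]
      exact hlπ hk
  refine ⟨(√k + π / l) / 2, by positivity, ?_, ?_⟩
  · have hk : k ≤ √k ^ 2 := by rw [sq_sqrt']; exact le_max_left k 0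
    nlinarith [sqrt_nonneg k]
  · rw [lt_div_iff₀ hl] at hsqrt
    have hπ : π / l * l = π := div_mul_cancel₀ π hl.ne'
    nlinarith

theorem cos_mul_sub_half_pos {ω l t : ℝ} (hω : 0 < ω) (hωl : ω * l < π) (ht : t ∈ Icc 0 l) :
    0 < cos (ω * (t - l / 2)) := by
  apply cos_pos_of_mem_Ioo
  constructor <;> nlinarith [ht.1, ht.2]

theorem hasDerivAt_mul_sub (ω c t : ℝ) : HasDerivAt (fun t => ω * (t - c)) ω t := by
  simpa using ((hasDerivAt_id t).sub_const c).const_mul ω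

/-- Comparison principle for genuinely twice differentiable `f` with `f'' + k f ≤ 0`. -/
theorem nonneg_of_classical_comparison (k l : ℝ) (hl : 0 < l)
    (hlπ : 0 < k → l < Real.pi / Real.sqrt k)
    (f : ℝ → ℝ) (hf : ContinuousOn f (Set.Icc 0 l))
    (hdiff : ∀ t ∈ Set.Ioo 0 l, DifferentiableAt ℝ f t)
    (hdiff2 : ∀ t ∈ Set.Ioo 0 l, DifferentiableAt ℝ (deriv f) t)
    (h0 : f 0 = 0) (hl0 : f l = 0)
    (hineq : ∀ t ∈ Set.Ioo 0 l, deriv (deriv f) t + k * f t ≤ 0) :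
    ∀ t ∈ Set.Icc 0 l, 0 ≤ f t := by
  obtain ⟨ω, hω, hωk, hωl⟩ := exists_pos_sq_gt_mul_lt_pi hl hlπ
  refine nonneg_of_pos_strict_supersolution (q := fun _ => k)
    (φ := fun t => cos (ω * (t - l / 2))) (φ' := fun t => -sin (ω * (t - l / 2)) * ω)
    (φ'' := fun t => -(cos (ω * (t - l / 2)) * ω) * ω)
    (fun t => (hasDerivAt_mul_sub ω (l / 2) t).cos)
    (fun t => ((hasDerivAt_mul_sub ω (l / 2) t).sin.neg.mul_const ω))
    (fun t ht => cos_mul_sub_half_pos hω hωl ht) (fun t ht => ?_)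
    hf hdiff hdiff2 h0.ge hl0.ge hineq
  nlinarith [cos_mul_sub_half_pos hω hωl (Ioo_subset_Icc_self ht)]
end

section
/- Let f : [0,l] → ℝ be continuous with f(0) = f(l) = 0 and suppose for some ε > 0 that f''(t) ≤ −ε in the support sense for every t ∈ (0,l). Then f(t) ≥ 0 for all t ∈ [0,l]. -/
open Filter Set

/-- Barrier step: if `f'' ≤ -ε` in the support sense on `(0,l)` and `f` vanishes at the
endpoints, then `f ≥ 0` on `[0,l]`. -/
theorem nonneg_of_suppSecondLE_neg (l ε : ℝ) (hl : 0 < l) (hε : 0 < ε)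
    (f : ℝ → ℝ) (hf : ContinuousOn f (Set.Icc 0 l)) (h0 : f 0 = 0) (hl0 : f l = 0)
    (hsupp : ∀ t ∈ Set.Ioo 0 l, SuppSecondLE f t (-ε)) :
    ∀ t ∈ Set.Icc 0 l, 0 ≤ f t := by
  by_contra hcon
  push_neg at hcon
  obtain ⟨t₀, ht₀, hneg⟩ := hcon
  obtain ⟨m, hm, hmin⟩ :=
    (isCompact_Icc (a := (0:ℝ)) (b := l)).exists_isMinOn
      ⟨0, Set.left_mem_Icc.2 hl.le⟩ hf
  have hfm : f m < 0 := lt_of_le_of_lt (hmin ht₀) hneg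
  have hm0 : m ≠ 0 := by rintro rfl; rw [h0] at hfm; exact lt_irrefl 0 hfm
  have hml : m ≠ l := by rintro rfl; rw [hl0] at hfm; exact lt_irrefl 0 hfm
  have hmIoo : m ∈ Set.Ioo 0 l := ⟨hm.1.lt_of_ne (Ne.symm hm0), hm.2.lt_of_ne hml⟩
  obtain ⟨A, hA⟩ := hsupp m hmIoo
  have h4 : (0:ℝ) < ε/4 := by linarith
  have hev := hA (ε/4) h4
  have hev2 : ∀ᶠ τ in nhds (0:ℝ), m + τ ∈ Set.Icc 0 l := by
    have hc : Continuous fun τ : ℝ => m + τ := by continuity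
    have h := (hc.continuousAt (x := (0:ℝ))).eventually_mem
      (isOpen_Ioo.mem_nhds (show m + 0 ∈ Set.Ioo 0 l by simpa using hmIoo))
    exact h.mono fun τ ht => Set.Ioo_subset_Icc_self ht
  obtain ⟨δ, hδ, hδ'⟩ := Metric.eventually_nhds_iff.1 (hev.and hev2)
  set τ := δ/2 with hτ
  have hτpos : 0 < τ := by positivity
  have hτδ : dist τ 0 < δ := by
    rw [Real.dist_eq, sub_zero, abs_of_pos hτpos]; simpa [hτ] using by linarith
  have hτδ' : dist (-τ) 0 < δ := by
    rw [Real.dist_eq, sub_zero, abs_neg, abs_of_pos hτpos]; linarith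
  have h1 := hδ' hτδ
  have h2 := hδ' hτδ'
  have e1 : 0 ≤ A * τ - ε/4 * τ^2 := by
    have hle : f m ≤ f (m + τ) := hmin h1.2
    nlinarith [h1.1]
  have e2 : 0 ≤ -(A * τ) - ε/4 * τ^2 := by
    have hle : f m ≤ f (m + -τ) := hmin h2.2
    nlinarith [h2.1]
  nlinarith [mul_pos hτpos hτpos]
end

section
/- Let f : [0,l] → ℝ be continuous with f(0) = f(l) = 0, and suppose there is a finite set S ⊂ (0,l) such that f''(t) ≤ 0 in the support sense for all t ∈ (0,l) \ S, and at each t ∈ S the upper right Dini derivative of f is at most its lower left Dini derivative (limsup_{τ→0⁺}(f(t+τ)−f(t))/τ ≤ liminf_{τ→0⁺}(f(t)−f(t−τ))/τ). Then f is concave on [0,l] and f(t) ≥ 0 for all t ∈ [0,l]. -/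
open Filter Set

open Topology

/-!
On a segment free of corner points, concavity follows from a minimum principle: if `f` dipped
strictly below a chord, then `f` minus that chord plus a small quadratic bump vanishing at the ends
would attain an interior minimum, where `f` would have to curve upward at least as fast as the bump,
contradicting `f'' ≤ 0`. Across a corner point `m` the two concave pieces glue, since every secant
slope from `m` to the right is at most `dPlus f m ≤ dMinus f m`, which is at most every secant
slope from `m` to the left. Inducting on the largest corner point gives concavity on `[0, l]`,
and a concave function is at least the minimum of its boundary values.
-/

section

variable {f : ℝ → ℝ}

theorem slope_le_slope_iff_slope_le_left {u v w : ℝ} (huv : u < v) (hvw : v < w) :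
    slope f v w ≤ slope f u v ↔ slope f u w ≤ slope f u v := by
  simp only [slope_def_field]
  rw [div_le_div_iff₀ (by linarith) (by linarith), div_le_div_iff₀ (by linarith) (by linarith)]
  constructor <;> intro h <;> linarith

theorem slope_le_slope_iff_slope_le_right {u v w : ℝ} (huv : u < v) (hvw : v < w) :
    slope f v w ≤ slope f u v ↔ slope f v w ≤ slope f u w := by
  simp only [slope_def_field]
  rw [div_le_div_iff₀ (by linarith) (by linarith), div_le_div_iff₀ (by linarith) (by linarith)]
  constructor <;> intro h <;> linarith

theorem SuppSecondLEZero.not_isLocalMin {m : ℝ} (hf : SuppSecondLEZero f m) {ε : ℝ} (hε : 0 < ε)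
    (β γ : ℝ) : ¬ IsLocalMin (fun t => f t - (γ + β * t + ε * t ^ 2)) m := by
  intro hmin
  obtain ⟨A, hA⟩ := hf
  have hright := (continuous_const_add m).tendsto' 0 m (add_zero m) |>.eventually hmin
  have hleft := continuous_neg.tendsto' 0 0 neg_zero |>.eventually hright
  have hsupp := hA (ε / 2) (half_pos hε)
  have hsupp' := continuous_neg.tendsto' 0 0 neg_zero |>.eventually hsupp
  obtain ⟨τ, ⟨⟨⟨hr, hl⟩, hs⟩, hs'⟩, hτ⟩ :=
    (((hright.and hleft).and hsupp).and hsupp' |>.filter_mono nhdsWithin_le_nhds).and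
      (self_mem_nhdsWithin : {τ : ℝ | τ ≠ 0} ∈ 𝓝[≠] 0) |>.exists
  simp only [← sub_eq_add_neg] at hl hs'
  -- the second difference at `m` is `≤ ε τ²` for `f` but `= 2 ε τ²` for the quadratic
  nlinarith [mul_pos hε (pow_pos (abs_pos.2 hτ) 2), sq_abs τ]

theorem slope_le_slope_of_suppSecondLEZero {x y z : ℝ} (hf : ContinuousOn f (Icc x z))
    (hsupp : ∀ t ∈ Ioo x z, SuppSecondLEZero f t) (hy : y ∈ Ioo x z) :
    slope f x z ≤ slope f x y := by
  have hyx : 0 < y - x := sub_pos.2 hy.1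
  have hzy : 0 < z - y := sub_pos.2 hy.2
  have hs : slope f x z * (z - x) = f z - f x := by
    rw [slope_def_field, div_mul_cancel₀ _ (by linarith)]
  by_contra! hlt
  have hgap : f y - f x < slope f x z * (y - x) := by
    rwa [slope_def_field f x y, div_lt_iff₀ hyx] at hlt
  set s := slope f x z
  set δ := s * (y - x) - (f y - f x)
  set ε := δ / (2 * ((y - x) * (z - y)))
  have hε : 0 < ε := div_pos (by linarith) (by positivity)
  have hεδ : ε * ((y - x) * (z - y)) = δ / 2 := by
    simp only [ε]; field_simp
  set g := fun t => f t - ((f x - s * x + ε * x * z) + (s - ε * (x + z)) * t + ε * t ^ 2)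
  have hg : ∀ t, g t = f t - (f x + s * (t - x)) + ε * ((t - x) * (z - t)) := fun t => by
    simp only [g]; ring
  have hgc : ContinuousOn g (Icc x z) := hf.sub (by fun_prop)
  obtain ⟨m, hm, hmin⟩ := isCompact_Icc.exists_isMinOn (nonempty_Icc.2 (hy.1.trans hy.2).le) hgc
  have hgm : g m < 0 := by
    have hmy : g m ≤ g y := hmin ⟨hy.1.le, hy.2.le⟩
    rw [hg y, hεδ] at hmy
    linarith
  have hmx : m ≠ x := by rintro rfl; rw [hg] at hgm; simp at hgm
  have hmz : m ≠ z := by rintro rfl; rw [hg] at hgm; linarith [hgm, hs]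
  have hm' : m ∈ Ioo x z := ⟨hm.1.lt_of_ne hmx.symm, hm.2.lt_of_ne hmz⟩
  exact (hsupp m hm').not_isLocalMin hε _ _ (hmin.isLocalMin (Icc_mem_nhds hm'.1 hm'.2))

theorem concaveOn_Icc_of_suppSecondLEZero {a b : ℝ} (hf : ContinuousOn f (Icc a b))
    (hsupp : ∀ t ∈ Ioo a b, SuppSecondLEZero f t) : ConcaveOn ℝ (Icc a b) f := by
  refine concaveOn_of_slope_anti_adjacent (convex_Icc a b) fun {x y z} hx hz hxy hyz => ?_
  simp only [← slope_def_field]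
  refine (slope_le_slope_iff_slope_le_left hxy hyz).2 (slope_le_slope_of_suppSecondLEZero
    (hf.mono (Icc_subset_Icc hx.1 hz.2)) (fun t ht => hsupp t ?_) ⟨hxy, hyz⟩)
  exact ⟨hx.1.trans_lt ht.1, ht.2.trans_le hz.2⟩

theorem ConcaveOn.slope_le_dPlus {m b q : ℝ} (hf : ConcaveOn ℝ (Icc m b) f) (hq : q ∈ Ioc m b) :
    (slope f m q : EReal) ≤ dPlus f m := by
  refine le_limsup_of_frequently_le' (Eventually.frequently ?_)
  filter_upwards [Ioo_mem_nhdsGT hq.1] with t ht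
  rw [← slope_def_field, EReal.coe_le_coe_iff]
  exact hf.slope_anti (left_mem_Icc.2 (hq.1.le.trans hq.2))
    ⟨⟨ht.1.le, ht.2.le.trans hq.2⟩, ht.1.ne'⟩ ⟨⟨hq.1.le, hq.2⟩, hq.1.ne'⟩ ht.2.le

theorem ConcaveOn.dMinus_le_slope {a m p : ℝ} (hf : ConcaveOn ℝ (Icc a m) f) (hp : p ∈ Ico a m) :
    dMinus f m ≤ (slope f m p : EReal) := by
  refine liminf_le_of_frequently_le' (Eventually.frequently ?_)
  filter_upwards [Ioo_mem_nhdsLT hp.2] with t ht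
  rw [← slope_def_field, EReal.coe_le_coe_iff]
  exact hf.slope_anti (right_mem_Icc.2 (hp.1.trans hp.2.le))
    ⟨⟨hp.1, hp.2.le⟩, hp.2.ne⟩ ⟨⟨hp.1.trans ht.1.le, ht.2.le⟩, ht.2.ne⟩ ht.1.le

theorem ConcaveOn.Icc_union_of_slope_le {a m b : ℝ} (hL : ConcaveOn ℝ (Icc a m) f)
    (hR : ConcaveOn ℝ (Icc m b) f)
    (hslope : ∀ p ∈ Ico a m, ∀ q ∈ Ioc m b, slope f m q ≤ slope f m p) :
    ConcaveOn ℝ (Icc a b) f := by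
  refine concaveOn_of_slope_anti_adjacent (convex_Icc a b) fun {x y z} hx hz hxy hyz => ?_
  rcases le_or_gt z m with hzm | hmz
  · exact hL.slope_anti_adjacent ⟨hx.1, (hxy.trans hyz).le.trans hzm⟩ ⟨hx.1.trans
      (hxy.trans hyz).le, hzm⟩ hxy hyz
  rcases le_or_gt m x with hmx | hxm
  · exact hR.slope_anti_adjacent ⟨hmx, hx.2⟩ ⟨hmx.trans (hxy.trans hyz).le, hz.2⟩ hxy hyz
  simp only [← slope_def_field]
  rcases lt_trichotomy y m with hym | rfl | hmy
  · have hcorner : slope f m z ≤ slope f y m := by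
      rw [slope_comm f y m]; exact hslope y ⟨hx.1.trans hxy.le, hym⟩ z ⟨hmz, hz.2⟩
    calc slope f y z ≤ slope f y m := (slope_le_slope_iff_slope_le_left hym hmz).1 hcorner
      _ ≤ slope f x y := by
        simp only [slope_def_field]
        exact hL.slope_anti_adjacent ⟨hx.1, hxm.le⟩ ⟨hx.1.trans hxm.le, le_rfl⟩ hxy hym
  · rw [slope_comm f x y]; exact hslope x ⟨hx.1, hxm⟩ z ⟨hmz, hz.2⟩
  · have hcorner : slope f m y ≤ slope f x m := by
      rw [slope_comm f x m]; exact hslope x ⟨hx.1, hxm⟩ y ⟨hmy, hyz.le.trans hz.2⟩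
    calc slope f y z ≤ slope f m y := by
          simp only [slope_def_field]
          exact hR.slope_anti_adjacent ⟨le_rfl, hmz.le.trans hz.2⟩ ⟨hmz.le, hz.2⟩ hmy hyz
      _ ≤ slope f x y := (slope_le_slope_iff_slope_le_right hxm hmy).1 hcorner

theorem ConcaveOn.Icc_union_of_dPlus_le_dMinus {a m b : ℝ} (hL : ConcaveOn ℝ (Icc a m) f)
    (hR : ConcaveOn ℝ (Icc m b) f) (hm : dPlus f m ≤ dMinus f m) : ConcaveOn ℝ (Icc a b) f :=
  hL.Icc_union_of_slope_le hR fun _p hp _q hq =>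
    EReal.coe_le_coe_iff.1 <| (hR.slope_le_dPlus hq).trans <| hm.trans <| hL.dMinus_le_slope hp

theorem concaveOn_Icc_of_suppSecondLEZero_of_dPlus_le_dMinus {a b : ℝ} (S : Finset ℝ)
    (hf : ContinuousOn f (Icc a b)) (hS : (S : Set ℝ) ⊆ Ioo a b)
    (hsupp : ∀ t ∈ Ioo a b \ (S : Set ℝ), SuppSecondLEZero f t)
    (hcorner : ∀ t ∈ (S : Set ℝ), dPlus f t ≤ dMinus f t) : ConcaveOn ℝ (Icc a b) f := by
  induction S using Finset.induction_on_max generalizing b with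
  | empty => exact concaveOn_Icc_of_suppSecondLEZero hf fun t ht => hsupp t ⟨ht, by simp⟩
  | insert m S hlt ih =>
    have hm : m ∈ Ioo a b := hS (by simp)
    refine ConcaveOn.Icc_union_of_dPlus_le_dMinus (m := m) ?_ ?_ (hcorner m (by simp))
    · refine ih (hf.mono (Icc_subset_Icc le_rfl hm.2.le)) (fun t ht => ⟨(hS (by simp [ht])).1,
        hlt t ht⟩) (fun t ht => hsupp t ⟨⟨ht.1.1, ht.1.2.trans hm.2⟩, ?_⟩)
        (fun t ht => hcorner t (by simp [ht]))
      simpa [ht.1.2.ne] using ht.2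
    · refine concaveOn_Icc_of_suppSecondLEZero (hf.mono (Icc_subset_Icc hm.1.le le_rfl))
        fun t ht => hsupp t ⟨⟨hm.1.trans ht.1, ht.2⟩, ?_⟩
      simp only [Finset.coe_insert, mem_insert_iff, Finset.mem_coe, not_or]
      exact ⟨ht.1.ne', fun htS => (hlt t htS).not_gt ht.1⟩

end

theorem concave_nonneg_piecewise_general (l : ℝ) (f : ℝ → ℝ)
    (hf : ContinuousOn f (Set.Icc 0 l)) (h0 : f 0 = 0) (hl0 : f l = 0)
    (S : Finset ℝ) (hS : (S : Set ℝ) ⊆ Set.Ioo 0 l)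
    (hsupp : ∀ t ∈ Set.Ioo 0 l \ (S : Set ℝ), SuppSecondLEZero f t)
    (hcorner : ∀ t ∈ (S : Set ℝ), dPlus f t ≤ dMinus f t) :
    ConcaveOn ℝ (Set.Icc 0 l) f ∧ ∀ t ∈ Set.Icc 0 l, 0 ≤ f t := by
  have hconc := concaveOn_Icc_of_suppSecondLEZero_of_dPlus_le_dMinus S hf hS hsupp hcorner
  refine ⟨hconc, fun t ht => ?_⟩
  have hl : 0 ≤ l := ht.1.trans ht.2
  simpa [h0, hl0] using hconc.min_le_of_mem_Icc (left_mem_Icc.2 hl) (right_mem_Icc.2 hl) ht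

/-- Piecewise support-sense concavity with finitely many corner points where the right
derivative is at most the left derivative. -/
theorem concave_nonneg_piecewise (l : ℝ) (hl : 0 < l) (f : ℝ → ℝ)
    (hf : ContinuousOn f (Set.Icc 0 l)) (h0 : f 0 = 0) (hl0 : f l = 0)
    (S : Finset ℝ) (hS : (S : Set ℝ) ⊆ Set.Ioo 0 l)
    (hsupp : ∀ t ∈ Set.Ioo 0 l \ (S : Set ℝ), SuppSecondLEZero f t)
    (hcorner : ∀ t ∈ (S : Set ℝ), dPlus f t ≤ dMinus f t) :
    ConcaveOn ℝ (Set.Icc 0 l) f ∧ ∀ t ∈ Set.Icc 0 l, 0 ≤ f t :=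
  concave_nonneg_piecewise_general l f hf h0 hl0 S hS hsupp hcorner
end
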